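/- For every m ∈ ℝ and every integer l ≥ 2, the l-th Hermite coefficient of u ↦ |u − m| satisfies a_l(m) = √(2/π) H_{l−2}(m) e^{−m²/2} / l!, that is, ∫_ℝ |u − m| H_l(u) φ(u) du = √(2/π) H_{l−2}(m) e^{−m²/2}. -/

import Mathlib

open MeasureTheory ProbabilityTheory Set Filter Topology Real
open scoped ENNReal NNReal

/-- The standard normal density `φ(u) = (2π)^(-1/2) e^(-u²/2)`. -/
noncomputable def stdNormalPDF (u : ℝ) : ℝ := Real.exp (-u ^ 2 / 2) / Real.sqrt (2 * Real.pi)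

/-- The standard normal distribution function `Φ(m) = ∫_{-∞}^m φ(u) du`. -/
noncomputable def stdNormalCDF (m : ℝ) : ℝ := ∫ u in Set.Iic m, stdNormalPDF u

/-- The probabilists' Hermite polynomial `Hₙ`, evaluated at a real number. -/
noncomputable def hermiteR (n : ℕ) (x : ℝ) : ℝ := Polynomial.aeval x (Polynomial.hermite n)

/-- The Hermite coefficients `aₖ(m) = (1/k!) ∫ |u − m| Hₖ(u) φ(u) du` of `u ↦ |u − m|`. -/
noncomputable def hermiteCoeff (k : ℕ) (m : ℝ) : ℝ :=
  (1 / (k.factorial : ℝ)) * ∫ u : ℝ, |u - m| * hermiteR k u * stdNormalPDF u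

/-!
Since `|x - m| / 2` is a fundamental solution of `d²/dx²` at `m`, integrating `|x - m| h''`
against a rapidly decaying `h` gives `2 h(m)`: on each side of `m` the integrand has the
antiderivative `(x - m) h' - h`, which vanishes at `±∞`. The Gaussian-weighted Hermite functions
`Gₙ(x) = Hₙ(x) e^{-x²/2}` satisfy `Gₙ' = -Gₙ₊₁`, so `Gₙ₊₂ = Gₙ''`, and the theorem follows.
-/

theorem integral_abs_sub_mul_eq_two_mul_of_hasDerivAt {h h' h'' : ℝ → ℝ} (m : ℝ)
    (hh : ∀ x, HasDerivAt h (h' x) x) (hh' : ∀ x, HasDerivAt h' (h'' x) x)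
    (hi : Integrable h) (hi' : Integrable fun x => (x - m) * h' x)
    (hi'' : Integrable fun x => (x - m) * h'' x) :
    ∫ x, |x - m| * h'' x = 2 * h m := by
  set F : ℝ → ℝ := fun x => (x - m) * h' x - h x
  have hF : ∀ x, HasDerivAt F ((x - m) * h'' x) x := fun x =>
    ((((hasDerivAt_id' x).sub_const m).mul (hh' x)).sub (hh x)).congr_deriv (by ring)
  have hFi : Integrable F := hi'.sub hi
  have hIoi : ∫ x in Ioi m, (x - m) * h'' x = h m := by
    have top := tendsto_zero_of_hasDerivAt_of_integrableOn_Ioi (a := m) (fun x _ => hF x)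
      hi''.integrableOn hFi.integrableOn
    rw [integral_Ioi_of_hasDerivAt_of_tendsto' (fun x _ => hF x) hi''.integrableOn top]
    simp [F]
  have hIic : ∫ x in Iic m, (x - m) * h'' x = -h m := by
    have bot := tendsto_zero_of_hasDerivAt_of_integrableOn_Iic (a := m) (fun x _ => hF x)
      hi''.integrableOn hFi.integrableOn
    rw [integral_Iic_of_hasDerivAt_of_tendsto' (fun x _ => hF x) hi''.integrableOn bot]
    simp [F]
  have habs : Integrable fun x => |x - m| * h'' x := by
    have hmeas : Measurable h'' := by
      rw [show h'' = deriv h' from funext fun x => (hh' x).deriv.symm]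
      exact measurable_deriv h'
    refine hi''.norm.mono' ((continuous_sub_right m).abs.measurable.mul hmeas).aestronglyMeasurable
      (Eventually.of_forall fun x => ?_)
    simp
  calc ∫ x, |x - m| * h'' x
      = (∫ x in Iic m, |x - m| * h'' x) + ∫ x in Ioi m, |x - m| * h'' x :=
        (intervalIntegral.integral_Iic_add_Ioi habs.integrableOn habs.integrableOn).symm
    _ = (∫ x in Iic m, -((x - m) * h'' x)) + ∫ x in Ioi m, (x - m) * h'' x := by
        congr 1
        · refine setIntegral_congr_fun measurableSet_Iic fun x hx => ?_
          rw [abs_of_nonpos (sub_nonpos.2 hx)]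
          ring
        · refine setIntegral_congr_fun measurableSet_Ioi fun x hx => ?_
          rw [abs_of_pos (sub_pos.2 hx)]
    _ = 2 * h m := by
        rw [integral_neg, hIic, hIoi]
        ring

open Polynomial

theorem integrable_aeval_mul_exp_neg_sq_div_two {R : Type*} [CommSemiring R] [Algebra R ℝ]
    (p : R[X]) : Integrable fun x : ℝ => aeval x p * exp (-x ^ 2 / 2) := by
  induction p using Polynomial.induction_on' with
  | add p q hp hq =>
    simp only [map_add, add_mul]
    exact hp.add hq
  | monomial n a =>
    have h := (integrable_rpow_mul_exp_neg_mul_sq (b := 1 / 2) (by norm_num)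
      (s := n) (neg_one_lt_zero.trans_le n.cast_nonneg)).const_mul (algebraMap R ℝ a)
    refine h.congr (Eventually.of_forall fun x => ?_)
    simp only [aeval_monomial, rpow_natCast]
    ring_nf

noncomputable def hermiteGauss (n : ℕ) (x : ℝ) : ℝ := hermiteR n x * exp (-x ^ 2 / 2)

theorem hasDerivAt_hermiteGauss (n : ℕ) (x : ℝ) :
    HasDerivAt (hermiteGauss n) (-hermiteGauss (n + 1) x) x := by
  have hinner : HasDerivAt (fun y : ℝ => -y ^ 2 / 2) (-x) x :=
    ((hasDerivAt_pow 2 x).neg.div_const 2).congr_deriv (by norm_num; ring)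
  refine (((hermite n).hasDerivAt_aeval x).mul hinner.exp).congr_deriv ?_
  simp only [hermiteGauss, hermiteR, hermite_succ, map_sub, map_mul, aeval_X]
  ring

theorem integrable_hermiteGauss (n : ℕ) : Integrable (hermiteGauss n) :=
  integrable_aeval_mul_exp_neg_sq_div_two (hermite n)

theorem integrable_sub_mul_hermiteGauss (m : ℝ) (n : ℕ) :
    Integrable fun x => (x - m) * hermiteGauss n x := by
  refine (integrable_aeval_mul_exp_neg_sq_div_two
    ((X - C m) * (hermite n).map (algebraMap ℤ ℝ))).congr (Eventually.of_forall fun x => ?_)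
  simp only [hermiteGauss, hermiteR, map_mul, map_sub, aeval_X, aeval_C, aeval_map_algebraMap,
    Algebra.algebraMap_self, RingHom.id_apply]
  ring

theorem integral_abs_sub_mul_hermiteGauss (m : ℝ) (n : ℕ) :
    ∫ x, |x - m| * hermiteGauss (n + 2) x = 2 * hermiteGauss n m := by
  have h'' : ∀ x, HasDerivAt (fun y => -hermiteGauss (n + 1) y) (hermiteGauss (n + 2) x) x :=
    fun x => (hasDerivAt_hermiteGauss (n + 1) x).neg.congr_deriv (neg_neg _)
  refine integral_abs_sub_mul_eq_two_mul_of_hasDerivAt m (hasDerivAt_hermiteGauss n) h''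
    (integrable_hermiteGauss n) ?_ (integrable_sub_mul_hermiteGauss m (n + 2))
  simp only [mul_neg]
  exact (integrable_sub_mul_hermiteGauss m (n + 1)).neg

theorem sqrt_two_div_pi_eq : √(2 / π) = 2 / √(2 * π) := by
  rw [show 2 / π = 2 ^ 2 / (2 * π) by field_simp, sqrt_div' _ (by positivity),
    sqrt_sq zero_le_two]

/-- for `l ≥ 2`, `a_l(m) = √(2/π) H_{l−2}(m) e^{−m²/2} / l!`, i.e.
`∫ |u − m| H_l(u) φ(u) du = √(2/π) H_{l−2}(m) e^{−m²/2}`. -/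
theorem hermiteCoeff_ge_two (m : ℝ) (l : ℕ) (hl : 2 ≤ l) :
    hermiteCoeff l m
      = Real.sqrt (2 / Real.pi) * hermiteR (l - 2) m * Real.exp (-m ^ 2 / 2)
          / (l.factorial : ℝ) ∧
    (∫ u : ℝ, |u - m| * hermiteR l u * stdNormalPDF u)
      = Real.sqrt (2 / Real.pi) * hermiteR (l - 2) m * Real.exp (-m ^ 2 / 2) := by
  obtain ⟨n, rfl⟩ := Nat.exists_eq_add_of_le' hl
  have hint : ∫ u : ℝ, |u - m| * hermiteR (n + 2) u * stdNormalPDF u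
      = √(2 / π) * hermiteR n m * exp (-m ^ 2 / 2) :=
    calc ∫ u : ℝ, |u - m| * hermiteR (n + 2) u * stdNormalPDF u
        = (√(2 * π))⁻¹ * ∫ u, |u - m| * hermiteGauss (n + 2) u := by
          rw [← integral_const_mul]
          congr 1 with u
          simp only [stdNormalPDF, hermiteGauss]
          ring
      _ = √(2 / π) * hermiteR n m * exp (-m ^ 2 / 2) := by
          rw [integral_abs_sub_mul_hermiteGauss, sqrt_two_div_pi_eq, hermiteGauss]
          ring
  refine ⟨?_, hint⟩
  rw [hermiteCoeff, hint, Nat.add_sub_cancel]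
  ring
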